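/- arXiv:2303.01469 — 3 statements merged into one kernel-verified Lean document; each statement's English description precedes it below -/
import Mathlib

section
/- Let d ≥ 1, let μ be a Borel probability measure on ℝ^d, and let t > 0. Then the Gaussian-smoothed density p_t is everywhere positive and differentiable on ℝ^d, its gradient is ∇p_t(y) = −∫_{ℝ^d} ((y−x)/t²)·(2πt²)^{−d/2} exp(−‖y−x‖₂²/(2t²)) dμ(x), and consequently the score function satisfies ∇ log p_t(y) = −(1/p_t(y)) ∫_{ℝ^d} ((y−x)/t²)·(2πt²)^{−d/2} exp(−‖y−x‖₂²/(2t²)) dμ(x) for every y ∈ ℝ^d; equivalently, ∇ log p_t(x_t) = −E[(x_t − x)/t² | x_t] where x ~ μ and x_t = x + t·z with z an independent standard Gaussian vector. -/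
open MeasureTheory ProbabilityTheory Real

noncomputable section

/-- The standard Gaussian measure on `ℝ^d`. -/
def stdGaussian (d : ℕ) : Measure (EuclideanSpace ℝ (Fin d)) :=
  (Measure.pi fun _ => gaussianReal 0 1).map (MeasurableEquiv.toLp 2 (Fin d → ℝ))

/-- The Gaussian-smoothed density of a measure `μ` on `ℝ^d` at noise level `t`:
`p_t(y) = ∫ (2πt²)^(-d/2) exp(-‖y-x‖²/(2t²)) dμ(x)`. -/
def gaussianSmoothedDensity {d : ℕ} (μ : Measure (EuclideanSpace ℝ (Fin d))) (t : ℝ)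
    (y : EuclideanSpace ℝ (Fin d)) : ℝ :=
  ∫ x, (2 * π * t ^ 2) ^ (-(d : ℝ) / 2) * Real.exp (-‖y - x‖ ^ 2 / (2 * t ^ 2)) ∂μ

/-!
The kernel `c * exp (-‖y - x‖² / (2t²))` is bounded by `|c|`, and its `y`-gradient
`-(kernel / t²) • (y - x)` by `|c| / t`, because `r * exp (-r² / (2t²)) ≤ t`
(from `1 + a ≤ exp a`). These uniform bounds let one differentiate under the integral sign
against any finite measure. The kernel is positive, so `p_t > 0` once `μ ≠ 0`, and the score
follows by the chain rule for `log`.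
-/

theorem HasGradientAt.log {E : Type*} [NormedAddCommGroup E] [InnerProductSpace ℝ E]
    [CompleteSpace E] {f : E → ℝ} {v x : E} (hf : HasGradientAt f v x) (hx : f x ≠ 0) :
    HasGradientAt (fun y => Real.log (f y)) ((f x)⁻¹ • v) x := by
  rw [hasGradientAt_iff_hasFDerivAt, map_smul]
  exact hf.hasFDerivAt.log hx

theorem mul_exp_neg_sq_div_le {t : ℝ} (ht : 0 < t) (r : ℝ) :
    r * Real.exp (-r ^ 2 / (2 * t ^ 2)) ≤ t := by
  set a := r ^ 2 / (2 * t ^ 2)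
  have hr : r ≤ t * (1 + a) := by
    rw [← sub_nonneg, show t * (1 + a) - r = ((r - t) ^ 2 + t ^ 2) / (2 * t) by
      simp only [a]; field_simp; ring]
    positivity
  have hexp : t * (1 + a) ≤ t * Real.exp a :=
    mul_le_mul_of_nonneg_left (by linarith [Real.add_one_le_exp a]) ht.le
  rw [neg_div, Real.exp_neg, ← div_eq_mul_inv, div_le_iff₀ (Real.exp_pos a)]
  linarith

section GaussianKernel

variable {E : Type*} [NormedAddCommGroup E]

/-- With `c = (2 * π * t ^ 2) ^ (-(d : ℝ) / 2)`, `∫ x, gaussianKernel c t y x ∂μ` is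
`gaussianSmoothedDensity μ t y` by definition. -/
def gaussianKernel (c t : ℝ) (y x : E) : ℝ :=
  c * Real.exp (-‖y - x‖ ^ 2 / (2 * t ^ 2))

theorem gaussianKernel_pos {c : ℝ} (hc : 0 < c) (t : ℝ) (y x : E) :
    0 < gaussianKernel c t y x := by
  unfold gaussianKernel; positivity

theorem norm_gaussianKernel_le (c t : ℝ) (y x : E) : ‖gaussianKernel c t y x‖ ≤ |c| := by
  rw [gaussianKernel, norm_mul, Real.norm_eq_abs, Real.norm_of_nonneg (Real.exp_pos _).le]
  refine mul_le_of_le_one_right (abs_nonneg c) (Real.exp_le_one_iff.mpr ?_)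
  rw [neg_div]
  exact neg_nonpos.mpr (by positivity)

theorem continuous_gaussianKernel (c t : ℝ) (y : E) : Continuous (gaussianKernel c t y) := by
  unfold gaussianKernel; fun_prop

section Integral

variable [MeasurableSpace E] [OpensMeasurableSpace E] (μ : Measure E) [IsFiniteMeasure μ]

theorem integrable_gaussianKernel (c t : ℝ) (y : E) : Integrable (gaussianKernel c t y) μ :=
  (integrable_const |c|).mono' (continuous_gaussianKernel c t y).aestronglyMeasurable
    (ae_of_all _ (norm_gaussianKernel_le c t y))

theorem integral_gaussianKernel_pos [NeZero μ] {c : ℝ} (hc : 0 < c) (t : ℝ) (y : E) :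
    0 < ∫ x, gaussianKernel c t y x ∂μ := by
  rw [integral_pos_iff_support_of_nonneg (fun x => (gaussianKernel_pos hc t y x).le)
    (integrable_gaussianKernel μ c t y)]
  have hsupp : Function.support (gaussianKernel c t y) = Set.univ :=
    Set.eq_univ_of_forall fun x => (gaussianKernel_pos hc t y x).ne'
  rw [hsupp]
  exact Measure.measure_univ_pos.mpr (NeZero.ne μ)

end Integral

variable [InnerProductSpace ℝ E]

theorem norm_gaussianKernel_div_smul_sub_le (c : ℝ) {t : ℝ} (ht : 0 < t) (y x : E) :
    ‖(gaussianKernel c t y x / t ^ 2) • (y - x)‖ ≤ |c| / t := by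
  rw [norm_smul, norm_div, norm_pow, Real.norm_of_nonneg ht.le, gaussianKernel, norm_mul,
    Real.norm_eq_abs, Real.norm_of_nonneg (Real.exp_pos _).le]
  calc |c| * Real.exp (-‖y - x‖ ^ 2 / (2 * t ^ 2)) / t ^ 2 * ‖y - x‖
      = |c| / t ^ 2 * (‖y - x‖ * Real.exp (-‖y - x‖ ^ 2 / (2 * t ^ 2))) := by ring
    _ ≤ |c| / t ^ 2 * t := by gcongr; exact mul_exp_neg_sq_div_le ht _
    _ = |c| / t := by field_simp

theorem hasFDerivAt_gaussianKernel (c t : ℝ) (x y : E) :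
    HasFDerivAt (fun y' => gaussianKernel c t y' x)
      (innerSL ℝ (-((gaussianKernel c t y x / t ^ 2) • (y - x)))) y := by
  have hsq : HasFDerivAt (fun y' : E => ‖y' - x‖ ^ 2) (2 • innerSL ℝ (y - x)) y := by
    simpa using ((hasFDerivAt_id y).sub_const x).norm_sq
  have hexp := ((hsq.const_mul (-(2 * t ^ 2)⁻¹)).exp).const_mul c
  have hfun : (fun y' => gaussianKernel c t y' x) =
      fun y' => c * Real.exp (-(2 * t ^ 2)⁻¹ * ‖y' - x‖ ^ 2) := by
    funext y'; rw [gaussianKernel]; ring_nf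
  rw [hfun]
  refine hexp.congr_fderiv ?_
  ext v
  simp only [gaussianKernel, mul_inv_rev, neg_mul, neg_smul, smul_neg, neg_apply, smul_apply,
    coe_innerSL_apply, nsmul_eq_mul, Nat.cast_ofNat, smul_eq_mul, map_neg, map_smul, neg_inj]
  ring_nf

variable [MeasurableSpace E] [OpensMeasurableSpace E] [CompleteSpace E]
  [SecondCountableTopology E] (μ : Measure E) [IsFiniteMeasure μ]

theorem hasGradientAt_integral_gaussianKernel (c : ℝ) {t : ℝ} (ht : 0 < t) (y : E) :
    HasGradientAt (fun y' => ∫ x, gaussianKernel c t y' x ∂μ)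
      (-∫ x, (gaussianKernel c t y x / t ^ 2) • (y - x) ∂μ) y := by
  have hcont : Continuous fun x => (gaussianKernel c t y x / t ^ 2) • (y - x) := by
    unfold gaussianKernel; fun_prop
  have hint : Integrable (fun x => (gaussianKernel c t y x / t ^ 2) • (y - x)) μ :=
    (integrable_const (|c| / t)).mono' hcont.aestronglyMeasurable
      (ae_of_all _ (norm_gaussianKernel_div_smul_sub_le c ht y))
  have hderiv := hasFDerivAt_integral_of_dominated_of_fderiv_le (μ := μ)
    (F' := fun y' x => innerSL ℝ (-((gaussianKernel c t y' x / t ^ 2) • (y' - x))))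
    (bound := fun _ => |c| / t) (Metric.ball_mem_nhds y one_pos)
    (.of_forall fun y' => (integrable_gaussianKernel μ c t y').aestronglyMeasurable)
    (integrable_gaussianKernel μ c t y)
    (Continuous.aestronglyMeasurable (by unfold gaussianKernel; fun_prop))
    (ae_of_all _ fun x y' _ => by
      rw [innerSL_apply_norm, norm_neg]; exact norm_gaussianKernel_div_smul_sub_le c ht y' x)
    (integrable_const _) (ae_of_all _ fun x y' _ => hasFDerivAt_gaussianKernel c t x y')
  simp_rw [map_neg] at hderiv
  rwa [integral_neg, (innerSL ℝ).integral_comp_comm hint, ← map_neg] at hderiv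

end GaussianKernel

theorem score_of_gaussian_smoothed_density_general
    (d : ℕ)
    (μ : Measure (EuclideanSpace ℝ (Fin d))) [IsProbabilityMeasure μ]
    (t : ℝ) (ht : 0 < t) :
    ∀ y : EuclideanSpace ℝ (Fin d),
      0 < gaussianSmoothedDensity μ t y ∧
      DifferentiableAt ℝ (gaussianSmoothedDensity μ t) y ∧
      gradient (gaussianSmoothedDensity μ t) y =
        -∫ x, (((2 * π * t ^ 2) ^ (-(d : ℝ) / 2) *
            Real.exp (-‖y - x‖ ^ 2 / (2 * t ^ 2))) / t ^ 2) • (y - x) ∂μ ∧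
      gradient (fun y' => Real.log (gaussianSmoothedDensity μ t y')) y =
        (-(gaussianSmoothedDensity μ t y)⁻¹) •
          ∫ x, (((2 * π * t ^ 2) ^ (-(d : ℝ) / 2) *
            Real.exp (-‖y - x‖ ^ 2 / (2 * t ^ 2))) / t ^ 2) • (y - x) ∂μ := by
  intro y
  have hc : 0 < (2 * π * t ^ 2) ^ (-(d : ℝ) / 2) := by positivity
  have hpos : 0 < gaussianSmoothedDensity μ t y := integral_gaussianKernel_pos μ hc t y
  have hgrad : HasGradientAt (gaussianSmoothedDensity μ t) _ y :=
    hasGradientAt_integral_gaussianKernel μ _ ht y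
  refine ⟨hpos, hgrad.differentiableAt, hgrad.gradient, ?_⟩
  rw [(hgrad.log hpos.ne').gradient, smul_neg, neg_smul]
  rfl

/-- **Lemma 1 of "Consistency Models"**: for any Borel probability measure `μ` on `ℝ^d`
and `t > 0`, the Gaussian-smoothed density `p_t` is everywhere positive and differentiable,
`∇p_t(y) = -∫ ((y-x)/t²)·(2πt²)^(-d/2) exp(-‖y-x‖²/(2t²)) dμ(x)`, and hence the score
satisfies `∇ log p_t(y) = -(1/p_t(y)) ∫ ((y-x)/t²)·(2πt²)^(-d/2) exp(-‖y-x‖²/(2t²)) dμ(x)`,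
i.e. `∇ log p_t(x_t) = -E[(x_t - x)/t² | x_t]` for `x ~ μ`, `x_t = x + t·z`. -/
theorem score_of_gaussian_smoothed_density
    (d : ℕ) (hd : 1 ≤ d)
    (μ : Measure (EuclideanSpace ℝ (Fin d))) [IsProbabilityMeasure μ]
    (t : ℝ) (ht : 0 < t) :
    ∀ y : EuclideanSpace ℝ (Fin d),
      0 < gaussianSmoothedDensity μ t y ∧
      DifferentiableAt ℝ (gaussianSmoothedDensity μ t) y ∧
      gradient (gaussianSmoothedDensity μ t) y =
        -∫ x, (((2 * π * t ^ 2) ^ (-(d : ℝ) / 2) *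
            Real.exp (-‖y - x‖ ^ 2 / (2 * t ^ 2))) / t ^ 2) • (y - x) ∂μ ∧
      gradient (fun y' => Real.log (gaussianSmoothedDensity μ t y')) y =
        (-(gaussianSmoothedDensity μ t y)⁻¹) •
          ∫ x, (((2 * π * t ^ 2) ^ (-(d : ℝ) / 2) *
            Real.exp (-‖y - x‖ ^ 2 / (2 * t ^ 2))) / t ^ 2) • (y - x) ∂μ :=
  score_of_gaussian_smoothed_density_general d μ t ht
end
end

section
/- Let d ≥ 1 and 0 < ε < T, and let τ : [0,1] → [ε,T] be continuously differentiable and strictly increasing with τ'(u) > 0 for all u, τ(0) = ε, τ(1) = T; for N ≥ 2 set t_n = τ((n−1)/(N−1)). Let μ be a Borel probability measure on ℝ^d with finite second moment; let f : ℝ^d × [ε,T] → ℝ^d be twice continuously differentiable with bounded first and second derivatives; let λ : [ε,T] → ℝ be bounded and continuous; let s : ℝ^d × [ε,T] → ℝ^d be continuous with sup_{y,t} ‖s(y,t)‖₂ < ∞; assume all expectations below are finite. Define the ℓ₁ consistency distillation loss L_CD^N = (1/(N−1)) Σ_{n=1}^{N−1} E[ λ(t_n) · ‖ f(x + t_{n+1}·z,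 t_{n+1}) − f( x + t_{n+1}·z + (t_{n+1}−t_n)·t_{n+1}·s(x + t_{n+1}·z, t_{n+1}), t_n ) ‖₁ ], with x ~ μ and z an independent standard Gaussian vector. Then lim_{N→∞} (N−1) · L_CD^N = ∫₀¹ E[ λ(τ(u)) · τ'(u) · ‖ τ(u) · D_y f(x + τ(u)·z, τ(u)) · s(x + τ(u)·z, τ(u)) − ∂_t f(x + τ(u)·z, τ(u)) ‖₁ ] du. -/
open MeasureTheory ProbabilityTheory Real

noncomputable section

/-- The `ℓ₁` norm on `ℝ^d`. -/
def l1norm {d : ℕ} (v : EuclideanSpace ℝ (Fin d)) : ℝ := ∑ i, |v i|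

/-- The `ℓ₁` consistency distillation loss with the Euler solver for the empirical
PF ODE `dx/dt = -t·s(x,t)` over the partition `tt 1 < ⋯ < tt N`. -/
def l1ConsistencyDistillationLoss (d : ℕ) (μ : Measure (EuclideanSpace ℝ (Fin d)))
    (lam : ℝ → ℝ)
    (f : EuclideanSpace ℝ (Fin d) → ℝ → EuclideanSpace ℝ (Fin d))
    (s : EuclideanSpace ℝ (Fin d) → ℝ → EuclideanSpace ℝ (Fin d))
    (N : ℕ) (tt : ℕ → ℝ) : ℝ :=
  (1 / ((N : ℝ) - 1)) * ∑ n ∈ Finset.Icc 1 (N - 1),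
    ∫ q : EuclideanSpace ℝ (Fin d) × EuclideanSpace ℝ (Fin d),
      lam (tt n) * l1norm (f (q.1 + tt (n + 1) • q.2) (tt (n + 1)) -
        f (q.1 + tt (n + 1) • q.2 +
            ((tt (n + 1) - tt n) * tt (n + 1)) • s (q.1 + tt (n + 1) • q.2) (tt (n + 1)))
          (tt n))
      ∂(μ.prod (stdGaussian d))

/-! A first-order Taylor expansion of `f` at `(x + t_{n+1} z, t_{n+1})`, with remainder controlled
by the bound on the second derivative, shows that the `n`-th Euler step contributes
`(t_{n+1} - t_n) Φ(t_n, t_{n+1})` up to `O((t_{n+1} - t_n)²)`, where `Φ(t₁, t₂)` is the expected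
weighted `ℓ₁` transport residual; the step can be pulled out of the `ℓ₁` norm because `τ` is
increasing. Since `t_{n+1} - t_n = O(1/N)`, these errors add up to `O(1/N)`. By dominated
convergence `Φ` is jointly continuous, hence uniformly continuous on the compact square, so the
remaining Riemann–Stieltjes sums `Σ (τ(v_{n+1}) - τ(v_n)) Φ(τ v_n, τ v_{n+1})`, with
`v_n = (n-1)/(N-1)`, converge to `∫₀¹ τ'(u) Φ(τ u, τ u) du`. -/

open Filter Topology Set
open scoped NNReal

section L1Norm

variable {d : ℕ}

lemma l1norm_nonneg (v : EuclideanSpace ℝ (Fin d)) : 0 ≤ l1norm v :=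
  Finset.sum_nonneg fun _ _ => abs_nonneg _

lemma l1norm_neg (v : EuclideanSpace ℝ (Fin d)) : l1norm (-v) = l1norm v := by
  simp [l1norm]

lemma l1norm_smul (c : ℝ) (v : EuclideanSpace ℝ (Fin d)) : l1norm (c • v) = |c| * l1norm v := by
  simp [l1norm, abs_mul, Finset.mul_sum]

lemma abs_l1norm_sub_l1norm_le (v w : EuclideanSpace ℝ (Fin d)) :
    |l1norm v - l1norm w| ≤ l1norm (v - w) := by
  rw [l1norm, l1norm, ← Finset.sum_sub_distrib]
  refine (Finset.abs_sum_le_sum_abs _ _).trans (Finset.sum_le_sum fun i _ => ?_)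
  simpa using abs_abs_sub_abs_le_abs_sub (v i) (w i)

lemma l1norm_le_mul_norm (v : EuclideanSpace ℝ (Fin d)) : l1norm v ≤ d * ‖v‖ :=
  calc l1norm v ≤ ∑ _i : Fin d, ‖v‖ := Finset.sum_le_sum fun i _ => PiLp.norm_apply_le v i
    _ = d * ‖v‖ := by simp

lemma continuous_l1norm : Continuous (l1norm (d := d)) := by
  unfold l1norm
  fun_prop

end L1Norm

section TaylorRemainder

variable {X Y : Type*} [NormedAddCommGroup X] [NormedSpace ℝ X]
  [NormedAddCommGroup Y] [NormedSpace ℝ Y]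

lemma lipschitzWith_fderiv_of_norm_iteratedFDeriv_two_le {F : X → Y} (hF : ContDiff ℝ 2 F)
    {M : ℝ≥0} (hM : ∀ x, ‖iteratedFDeriv ℝ 2 F x‖ ≤ M) : LipschitzWith M (fderiv ℝ F) := by
  refine lipschitzWith_of_nnnorm_fderiv_le
    ((hF.fderiv_right (m := 1) le_rfl).differentiable one_ne_zero) fun x => ?_
  rw [← NNReal.coe_le_coe, coe_nnnorm, ← norm_iteratedFDeriv_one, norm_iteratedFDeriv_fderiv]
  exact hM x

lemma norm_sub_sub_fderiv_le_of_lipschitzWith {F : X → Y} (hF : Differentiable ℝ F) {M : ℝ≥0}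
    (hF' : LipschitzWith M (fderiv ℝ F)) (x h : X) :
    ‖F (x + h) - F x - fderiv ℝ F x h‖ ≤ M * ‖h‖ ^ 2 := by
  have hbound : ∀ z ∈ Metric.closedBall x ‖h‖, ‖fderiv ℝ F z - fderiv ℝ F x‖ ≤ M * ‖h‖ :=
    fun z hz => by
      rw [← dist_eq_norm]
      exact (hF'.dist_le_mul z x).trans (mul_le_mul_of_nonneg_left hz M.coe_nonneg)
  have := (convex_closedBall x ‖h‖).norm_image_sub_le_of_norm_fderiv_le' (fun z _ => hF z) hbound
    (Metric.mem_closedBall_self (norm_nonneg h)) (y := x + h) (by simp)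
  rwa [add_sub_cancel_left, mul_assoc, ← pow_two] at this

lemma norm_euler_step_sub_le {F : X × ℝ → Y} (hF : Differentiable ℝ F) {M : ℝ≥0}
    (hF' : LipschitzWith M (fderiv ℝ F)) (y w : X) (t Δ : ℝ) :
    ‖F (y + Δ • w, t - Δ) - F (y, t) -
        Δ • (fderiv ℝ F (y, t) (w, 0) - fderiv ℝ F (y, t) (0, 1))‖
      ≤ M * (|Δ| * max ‖w‖ 1) ^ 2 := by
  have hstep : (y, t) + Δ • ((w, 0) - (0, 1)) = (y + Δ • w, t - Δ) := by
    ext <;> simp [sub_eq_add_neg]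
  have hnorm : ‖Δ • (((w, 0) : X × ℝ) - (0, 1))‖ = |Δ| * max ‖w‖ 1 := by
    simp [norm_smul, Prod.norm_def, mul_max_of_nonneg _ _ (abs_nonneg Δ)]
  have := norm_sub_sub_fderiv_le_of_lipschitzWith hF hF' (y, t) (Δ • ((w, 0) - (0, 1)))
  rwa [hstep, hnorm, map_smul, map_sub] at this

end TaylorRemainder

section TransportResidual

variable {X Y : Type*} [NormedAddCommGroup X] [NormedSpace ℝ X]
  [NormedAddCommGroup Y] [NormedSpace ℝ Y]

lemma fderiv_comp_prodMk_left_apply {Z : Type*} [NormedAddCommGroup Z] [NormedSpace ℝ Z]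
    {F : X × Z → Y} {x : X} {z : Z} (hF : DifferentiableAt ℝ F (x, z)) (v : X) :
    fderiv ℝ (fun x' => F (x', z)) x v = fderiv ℝ F (x, z) (v, 0) :=
  congrArg (· v) (hF.hasFDerivAt.comp x (hasFDerivAt_prodMk_left (𝕜 := ℝ) x z)).fderiv

lemma deriv_comp_prodMk_right {F : X × ℝ → Y} {x : X} {t : ℝ}
    (hF : DifferentiableAt ℝ F (x, t)) :
    deriv (fun t' => F (x, t')) t = fderiv ℝ F (x, t) (0, 1) :=
  (hF.hasFDerivAt.comp_hasDerivAt t ((hasDerivAt_const t x).prodMk (hasDerivAt_id t))).deriv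

variable {f : X → ℝ → Y} {s : X → ℝ → X}

/-- `f` is constant along the solutions of the ODE `dy/dt = -t • s(y, t)` iff this vanishes. -/
def transportResidual (f : X → ℝ → Y) (s : X → ℝ → X) (y : X) (t : ℝ) : Y :=
  t • fderiv ℝ (fun y' => f y' t) y (s y t) - deriv (fun t' => f y t') t

lemma transportResidual_eq (hf : Differentiable ℝ (fun q : X × ℝ => f q.1 q.2)) (y : X) (t : ℝ) :
    transportResidual f s y t =
      t • fderiv ℝ (fun q : X × ℝ => f q.1 q.2) (y, t) (s y t, 0) -
        fderiv ℝ (fun q : X × ℝ => f q.1 q.2) (y, t) (0, 1) := by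
  rw [← fderiv_comp_prodMk_left_apply (hf _), ← deriv_comp_prodMk_right (hf _)]
  rfl

lemma continuous_transportResidual (hf : ContDiff ℝ 1 (fun q : X × ℝ => f q.1 q.2))
    (hs : Continuous (fun q : X × ℝ => s q.1 q.2)) :
    Continuous (fun q : X × ℝ => transportResidual f s q.1 q.2) := by
  simp_rw [transportResidual_eq (hf.differentiable one_ne_zero)]
  have := hf.continuous_fderiv one_ne_zero
  fun_prop

lemma norm_transportResidual_le (hf : Differentiable ℝ (fun q : X × ℝ => f q.1 q.2)) {M : ℝ}
    (hM : ∀ q, ‖fderiv ℝ (fun q : X × ℝ => f q.1 q.2) q‖ ≤ M) (y : X) (t : ℝ) :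
    ‖transportResidual f s y t‖ ≤ (|t| * ‖s y t‖ + 1) * M := by
  rw [transportResidual_eq hf]
  have hM0 : 0 ≤ M := (norm_nonneg _).trans (hM (y, t))
  calc _ ≤ |t| * (M * ‖s y t‖) + M * 1 := by
        refine (norm_sub_le _ _).trans (add_le_add ?_ ?_)
        · rw [norm_smul, Real.norm_eq_abs]
          gcongr
          exact ((fderiv ℝ _ _).le_opNorm _).trans
            (by simpa [Prod.norm_def] using mul_le_mul_of_nonneg_right (hM (y, t)) (norm_nonneg _))
        · exact ((fderiv ℝ _ _).le_opNorm _).trans (by simpa [Prod.norm_def] using hM (y, t))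
    _ = (|t| * ‖s y t‖ + 1) * M := by ring

end TransportResidual

section EuclideanL1Loss

variable {d : ℕ} (P : Measure (EuclideanSpace ℝ (Fin d) × EuclideanSpace ℝ (Fin d)))
  (lam : ℝ → ℝ) (f s : EuclideanSpace ℝ (Fin d) → ℝ → EuclideanSpace ℝ (Fin d))

def l1DistillationStepLoss (t₁ t₂ : ℝ) : ℝ :=
  ∫ q, lam t₁ * l1norm (f (q.1 + t₂ • q.2) t₂ -
      f (q.1 + t₂ • q.2 + ((t₂ - t₁) * t₂) • s (q.1 + t₂ • q.2) t₂) t₁) ∂P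

def l1ResidualLoss (t₁ t₂ : ℝ) : ℝ :=
  ∫ q, lam t₁ * l1norm (transportResidual f s (q.1 + t₂ • q.2) t₂) ∂P

variable {P lam f s}

lemma abs_l1norm_euler_step_sub_le
    (hf : Differentiable ℝ (fun q : EuclideanSpace ℝ (Fin d) × ℝ => f q.1 q.2)) {M : ℝ≥0}
    (hf' : LipschitzWith M (fderiv ℝ (fun q : EuclideanSpace ℝ (Fin d) × ℝ => f q.1 q.2)))
    (y : EuclideanSpace ℝ (Fin d)) {t₁ t₂ : ℝ} (h₁₂ : t₁ ≤ t₂) :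
    |l1norm (f y t₂ - f (y + ((t₂ - t₁) * t₂) • s y t₂) t₁) -
        (t₂ - t₁) * l1norm (transportResidual f s y t₂)|
      ≤ d * (M * ((t₂ - t₁) * max (|t₂| * ‖s y t₂‖) 1) ^ 2) := by
  have hΔ : 0 ≤ t₂ - t₁ := sub_nonneg.mpr h₁₂
  have hstep := norm_euler_step_sub_le hf hf' y (t₂ • s y t₂) t₂ (t₂ - t₁)
  have hlin : ((t₂ • s y t₂, 0) : EuclideanSpace ℝ (Fin d) × ℝ) = t₂ • (s y t₂, 0) := by simp
  rw [sub_sub_cancel, smul_smul, hlin, map_smul, ← transportResidual_eq hf, abs_of_nonneg hΔ,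
    norm_smul, Real.norm_eq_abs] at hstep
  calc _ = |l1norm (f (y + ((t₂ - t₁) * t₂) • s y t₂) t₁ - f y t₂) -
          l1norm ((t₂ - t₁) • transportResidual f s y t₂)| := by
        rw [← l1norm_neg, neg_sub, l1norm_smul, abs_of_nonneg hΔ]
    _ ≤ l1norm (f (y + ((t₂ - t₁) * t₂) • s y t₂) t₁ - f y t₂ -
          (t₂ - t₁) • transportResidual f s y t₂) := abs_l1norm_sub_l1norm_le _ _
    _ ≤ d * ‖f (y + ((t₂ - t₁) * t₂) • s y t₂) t₁ - f y t₂ -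
          (t₂ - t₁) • transportResidual f s y t₂‖ := l1norm_le_mul_norm _
    _ ≤ _ := by gcongr

lemma abs_l1DistillationStepLoss_sub_le [IsProbabilityMeasure P]
    (hf : Differentiable ℝ (fun q : EuclideanSpace ℝ (Fin d) × ℝ => f q.1 q.2)) {M : ℝ≥0}
    (hf' : LipschitzWith M (fderiv ℝ (fun q : EuclideanSpace ℝ (Fin d) × ℝ => f q.1 q.2)))
    {t₁ t₂ Λ S : ℝ} (h₁₂ : t₁ ≤ t₂) (hlam : |lam t₁| ≤ Λ) (hs : ∀ y, |t₂| * ‖s y t₂‖ ≤ S)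
    (hstep_int : Integrable (fun q => lam t₁ * l1norm (f (q.1 + t₂ • q.2) t₂ -
      f (q.1 + t₂ • q.2 + ((t₂ - t₁) * t₂) • s (q.1 + t₂ • q.2) t₂) t₁)) P)
    (hres_int : Integrable
      (fun q => lam t₁ * l1norm (transportResidual f s (q.1 + t₂ • q.2) t₂)) P) :
    |l1DistillationStepLoss P lam f s t₁ t₂ - (t₂ - t₁) * l1ResidualLoss P lam f s t₁ t₂|
      ≤ Λ * (d * (M * max S 1 ^ 2)) * (t₂ - t₁) ^ 2 := by
  rw [l1DistillationStepLoss, l1ResidualLoss, ← integral_const_mul,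
    ← integral_sub hstep_int (hres_int.const_mul _), ← Real.norm_eq_abs]
  refine (norm_integral_le_of_norm_le_const
    (C := Λ * (d * (M * max S 1 ^ 2)) * (t₂ - t₁) ^ 2) (Eventually.of_forall fun q => ?_)).trans_eq
    (by simp)
  set y := q.1 + t₂ • q.2
  have hΛ : 0 ≤ Λ := (abs_nonneg _).trans hlam
  have hmax : max (|t₂| * ‖s y t₂‖) 1 ≤ max S 1 := max_le_max_right 1 (hs y)
  rw [Real.norm_eq_abs, ← mul_left_comm, ← mul_sub, abs_mul]
  calc _ ≤ Λ * (d * (M * ((t₂ - t₁) * max (|t₂| * ‖s y t₂‖) 1) ^ 2)) :=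
        mul_le_mul hlam (abs_l1norm_euler_step_sub_le hf hf' y h₁₂) (abs_nonneg _) hΛ
    _ ≤ Λ * (d * (M * ((t₂ - t₁) * max S 1) ^ 2)) := by gcongr
    _ = _ := by ring

lemma abs_mul_l1norm_transportResidual_le
    (hf : Differentiable ℝ (fun q : EuclideanSpace ℝ (Fin d) × ℝ => f q.1 q.2)) {M : ℝ}
    (hM : ∀ q, ‖fderiv ℝ (fun q : EuclideanSpace ℝ (Fin d) × ℝ => f q.1 q.2) q‖ ≤ M)
    {a b Λ S : ℝ} (hlam : ∀ t ∈ Icc a b, |lam t| ≤ Λ) (hs : ∀ y, ∀ t ∈ Icc a b, ‖s y t‖ ≤ S)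
    {t₁ t₂ : ℝ} (ht₁ : t₁ ∈ Icc a b) (ht₂ : t₂ ∈ Icc a b) (y : EuclideanSpace ℝ (Fin d)) :
    |lam t₁ * l1norm (transportResidual f s y t₂)| ≤ Λ * (d * ((max |a| |b| * S + 1) * M)) := by
  have hM0 : 0 ≤ M := (norm_nonneg _).trans (hM (y, t₂))
  rw [abs_mul, abs_of_nonneg (l1norm_nonneg _)]
  refine mul_le_mul (hlam t₁ ht₁) ((l1norm_le_mul_norm _).trans ?_) (l1norm_nonneg _)
    ((abs_nonneg _).trans (hlam t₁ ht₁))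
  gcongr
  refine (norm_transportResidual_le hf hM y t₂).trans ?_
  gcongr
  · exact abs_le_max_abs_abs ht₂.1 ht₂.2
  · exact hs y t₂ ht₂

lemma continuous_mul_l1norm_transportResidual (hlam : Continuous lam)
    (hf : ContDiff ℝ 1 (fun q : EuclideanSpace ℝ (Fin d) × ℝ => f q.1 q.2))
    (hs : Continuous (fun q : EuclideanSpace ℝ (Fin d) × ℝ => s q.1 q.2)) :
    Continuous (fun x : (ℝ × ℝ) × (EuclideanSpace ℝ (Fin d) × EuclideanSpace ℝ (Fin d)) =>
      lam x.1.1 * l1norm (transportResidual f s (x.2.1 + x.1.2 • x.2.2) x.1.2)) := by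
  have := continuous_transportResidual hf hs
  have := continuous_l1norm (d := d)
  fun_prop

lemma integrable_mul_l1norm_transportResidual [IsFiniteMeasure P] (hlam_cont : Continuous lam)
    (hf : ContDiff ℝ 1 (fun q : EuclideanSpace ℝ (Fin d) × ℝ => f q.1 q.2))
    (hs_cont : Continuous (fun q : EuclideanSpace ℝ (Fin d) × ℝ => s q.1 q.2)) {M : ℝ}
    (hM : ∀ q, ‖fderiv ℝ (fun q : EuclideanSpace ℝ (Fin d) × ℝ => f q.1 q.2) q‖ ≤ M)
    {a b Λ S : ℝ} (hlam : ∀ t ∈ Icc a b, |lam t| ≤ Λ) (hs : ∀ y, ∀ t ∈ Icc a b, ‖s y t‖ ≤ S)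
    {t₁ t₂ : ℝ} (ht₁ : t₁ ∈ Icc a b) (ht₂ : t₂ ∈ Icc a b) :
    Integrable (fun q => lam t₁ * l1norm (transportResidual f s (q.1 + t₂ • q.2) t₂)) P :=
  .of_bound ((continuous_mul_l1norm_transportResidual hlam_cont hf hs_cont).comp
      (Continuous.prodMk_right (t₁, t₂))).aestronglyMeasurable _
    (Eventually.of_forall fun _ => abs_mul_l1norm_transportResidual_le
      (hf.differentiable one_ne_zero) hM hlam hs ht₁ ht₂ _)

lemma continuousOn_l1ResidualLoss [IsFiniteMeasure P] (hlam_cont : Continuous lam)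
    (hf : ContDiff ℝ 1 (fun q : EuclideanSpace ℝ (Fin d) × ℝ => f q.1 q.2))
    (hs_cont : Continuous (fun q : EuclideanSpace ℝ (Fin d) × ℝ => s q.1 q.2)) {M : ℝ}
    (hM : ∀ q, ‖fderiv ℝ (fun q : EuclideanSpace ℝ (Fin d) × ℝ => f q.1 q.2) q‖ ≤ M)
    {a b Λ S : ℝ} (hlam : ∀ t ∈ Icc a b, |lam t| ≤ Λ) (hs : ∀ y, ∀ t ∈ Icc a b, ‖s y t‖ ≤ S) :
    ContinuousOn (fun p : ℝ × ℝ => l1ResidualLoss P lam f s p.1 p.2) (Icc a b ×ˢ Icc a b) :=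
  continuousOn_of_dominated
    (fun p _ => ((continuous_mul_l1norm_transportResidual hlam_cont hf hs_cont).comp
      (Continuous.prodMk_right p)).aestronglyMeasurable)
    (fun _ hp => Eventually.of_forall fun _ => abs_mul_l1norm_transportResidual_le
      (hf.differentiable one_ne_zero) hM hlam hs hp.1 hp.2 _)
    (integrable_const _)
    (Eventually.of_forall fun q =>
      ((continuous_mul_l1norm_transportResidual hlam_cont hf hs_cont).comp
        (Continuous.prodMk_left q)).continuousOn)

lemma exists_abs_l1DistillationStepLoss_sub_le [IsProbabilityMeasure P] (hlam_cont : Continuous lam)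
    (hf : ContDiff ℝ 2 (fun q : EuclideanSpace ℝ (Fin d) × ℝ => f q.1 q.2)) {M : ℝ}
    (hf_bdd : ∀ q, ‖iteratedFDeriv ℝ 1 (fun q : EuclideanSpace ℝ (Fin d) × ℝ => f q.1 q.2) q‖ ≤ M ∧
      ‖iteratedFDeriv ℝ 2 (fun q : EuclideanSpace ℝ (Fin d) × ℝ => f q.1 q.2) q‖ ≤ M)
    (hs_cont : Continuous (fun q : EuclideanSpace ℝ (Fin d) × ℝ => s q.1 q.2))
    {a b Λ S : ℝ} (hlam : ∀ t ∈ Icc a b, |lam t| ≤ Λ) (hs : ∀ y, ∀ t ∈ Icc a b, ‖s y t‖ ≤ S)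
    (hstep_int : ∀ t₁ ∈ Icc a b, ∀ t₂ ∈ Icc a b,
      Integrable (fun q => lam t₁ * l1norm (f (q.1 + t₂ • q.2) t₂ -
        f (q.1 + t₂ • q.2 + ((t₂ - t₁) * t₂) • s (q.1 + t₂ • q.2) t₂) t₁)) P) :
    ∃ C, ∀ t₁ ∈ Icc a b, ∀ t₂ ∈ Icc a b, t₁ ≤ t₂ →
      |l1DistillationStepLoss P lam f s t₁ t₂ - (t₂ - t₁) * l1ResidualLoss P lam f s t₁ t₂|
        ≤ C * (t₂ - t₁) ^ 2 := by
  lift M to ℝ≥0 using (norm_nonneg _).trans (hf_bdd 0).1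
  have hM : ∀ q, ‖fderiv ℝ (fun q : EuclideanSpace ℝ (Fin d) × ℝ => f q.1 q.2) q‖ ≤ M :=
    fun q => by rw [← norm_iteratedFDeriv_one]; exact (hf_bdd q).1
  exact ⟨_, fun t₁ ht₁ t₂ ht₂ h₁₂ => abs_l1DistillationStepLoss_sub_le
    (hf.differentiable two_ne_zero)
    (lipschitzWith_fderiv_of_norm_iteratedFDeriv_two_le hf fun q => (hf_bdd q).2) h₁₂
    (hlam t₁ ht₁) (fun y => mul_le_mul (abs_le_max_abs_abs ht₂.1 ht₂.2) (hs y t₂ ht₂)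
      (norm_nonneg _) ((abs_nonneg _).trans (le_max_left _ _)))
    (hstep_int t₁ ht₁ t₂ ht₂)
    (integrable_mul_l1norm_transportResidual hlam_cont (hf.of_le one_le_two) hs_cont hM hlam hs
      ht₁ ht₂)⟩

end EuclideanL1Loss

section RiemannSum

variable {τ τ' : ℝ → ℝ}

lemma natCast_div_mem_Icc {i m : ℕ} (h : i ≤ m) : (i : ℝ) / m ∈ Icc (0 : ℝ) 1 :=
  ⟨by positivity, div_le_one_of_le₀ (by exact_mod_cast h) (Nat.cast_nonneg m)⟩

lemma abs_sub_mul_sub_integral_mul_le {g : ℝ → ℝ} {a b c K ω : ℝ} (hab : a ≤ b)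
    (hτ : ∀ u ∈ Icc a b, HasDerivAt τ (τ' u) u) (hτ' : ContinuousOn τ' (Icc a b))
    (hg : ContinuousOn g (Icc a b)) (hK : ∀ u ∈ Icc a b, |τ' u| ≤ K)
    (hω : ∀ u ∈ Icc a b, |c - g u| ≤ ω) :
    |(τ b - τ a) * c - ∫ u in a..b, τ' u * g u| ≤ K * ω * (b - a) := by
  have hτ'i : IntervalIntegrable τ' volume a b := hτ'.intervalIntegrable_of_Icc hab
  rw [← intervalIntegral.integral_eq_sub_of_hasDerivAt
      (fun u hu => hτ u (by rwa [uIcc_of_le hab] at hu)) hτ'i,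
    ← intervalIntegral.integral_mul_const, ← intervalIntegral.integral_sub (hτ'i.mul_const c)
      ((hτ'.mul hg).intervalIntegrable_of_Icc hab : IntervalIntegrable (fun u => τ' u * g u) _ a b),
    ← Real.norm_eq_abs]
  refine (intervalIntegral.norm_integral_le_of_norm_le_const fun u hu => ?_).trans_eq
    (by rw [abs_of_nonneg (sub_nonneg.mpr hab)])
  rw [uIoc_of_le hab] at hu
  have hu' : u ∈ Icc a b := Ioc_subset_Icc_self hu
  rw [← mul_sub, norm_mul, Real.norm_eq_abs, Real.norm_eq_abs]
  exact mul_le_mul (hK u hu') (hω u hu') (abs_nonneg _) ((abs_nonneg _).trans (hK u hu'))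

lemma abs_sub_mul_sub_integral_diag_le {Φ : ℝ × ℝ → ℝ} {K η ω a b : ℝ}
    (hτ : ∀ u ∈ Icc (0 : ℝ) 1, HasDerivAt τ (τ' u) u) (hτ' : ContinuousOn τ' (Icc 0 1))
    (hΦ : ContinuousOn Φ (Icc 0 1 ×ˢ Icc 0 1)) (hK : ∀ u ∈ Icc (0 : ℝ) 1, ‖τ' u‖ ≤ K)
    (hΦη : ∀ x ∈ Icc (0 : ℝ) 1 ×ˢ Icc (0 : ℝ) 1, ∀ y ∈ Icc (0 : ℝ) 1 ×ˢ Icc (0 : ℝ) 1,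
      dist x y < η → dist (Φ x) (Φ y) < ω)
    (ha : 0 ≤ a) (hab : a ≤ b) (hb : b ≤ 1) (hba : b - a < η) :
    |(τ b - τ a) * Φ (a, b) - ∫ u in a..b, τ' u * Φ (u, u)| ≤ K * ω * (b - a) := by
  have hsub : Icc a b ⊆ Icc 0 1 := Icc_subset_Icc ha hb
  have hdiag : ContinuousOn (fun u => Φ (u, u)) (Icc a b) :=
    hΦ.comp (continuous_id.prodMk continuous_id).continuousOn fun u hu => ⟨hsub hu, hsub hu⟩
  refine abs_sub_mul_sub_integral_mul_le hab (fun u hu => hτ u (hsub hu)) (hτ'.mono hsub) hdiag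
    (fun u hu => hK u (hsub hu)) fun u hu => ?_
  rw [← Real.dist_eq]
  refine (hΦη _ ⟨hsub (left_mem_Icc.mpr hab), hsub (right_mem_Icc.mpr hab)⟩
    _ ⟨hsub hu, hsub hu⟩ ?_).le
  rw [Prod.dist_eq, Real.dist_eq, Real.dist_eq]
  refine max_lt ((abs_le.mpr ⟨?_, ?_⟩).trans_lt hba) ((abs_le.mpr ⟨?_, ?_⟩).trans_lt hba) <;>
    linarith [hu.1, hu.2]

lemma intervalIntegral_eq_sum_uniformPartition {g : ℝ → ℝ} (hg : ContinuousOn g (Icc 0 1))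
    {m : ℕ} (hm : m ≠ 0) :
    ∫ u in (0 : ℝ)..1, g u = ∑ i ∈ Finset.range m, ∫ u in (i / m : ℝ)..((i + 1 : ℕ) / m), g u := by
  rw [intervalIntegral.sum_integral_adjacent_intervals fun i hi =>
    (hg.mono (Icc_subset_Icc (natCast_div_mem_Icc hi.le).1 (natCast_div_mem_Icc hi).2)
      ).intervalIntegrable_of_Icc (by gcongr; simp)]
  simp [hm]

theorem tendsto_uniformPartition_sum_sub_mul (hτ : ∀ u ∈ Icc (0 : ℝ) 1, HasDerivAt τ (τ' u) u)
    (hτ' : ContinuousOn τ' (Icc 0 1)) {Φ : ℝ × ℝ → ℝ} (hΦ : ContinuousOn Φ (Icc 0 1 ×ˢ Icc 0 1)) :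
    Tendsto (fun m : ℕ => ∑ i ∈ Finset.range m,
        (τ ((i + 1 : ℕ) / m) - τ (i / m)) * Φ (i / m, (i + 1 : ℕ) / m))
      atTop (𝓝 (∫ u in (0 : ℝ)..1, τ' u * Φ (u, u))) := by
  obtain ⟨K, hK⟩ := isCompact_Icc.exists_bound_of_continuousOn hτ'
  have hK0 : 0 ≤ K := (norm_nonneg _).trans (hK 0 ⟨le_rfl, zero_le_one⟩)
  have hΦu := (isCompact_Icc.prod isCompact_Icc).uniformContinuousOn_of_continuous hΦ
  rw [Metric.tendsto_atTop]
  intro δ hδ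
  obtain ⟨η, hη, hΦη⟩ := Metric.uniformContinuousOn_iff.mp hΦu (δ / (K + 1)) (by positivity)
  obtain ⟨m₀, hm₀⟩ := exists_nat_gt (1 / η)
  refine ⟨m₀, fun m hm => ?_⟩
  have hm₀m : (m₀ : ℝ) ≤ m := by exact_mod_cast hm
  have hm0 : (0 : ℝ) < m := ((one_div_pos.mpr hη).trans hm₀).trans_le hm₀m
  have hmη : 1 / (m : ℝ) < η := by
    rw [one_div_lt hm0 hη]
    exact hm₀.trans_le hm₀m
  set v : ℕ → ℝ := fun i => i / m
  have hv_succ : ∀ i, v (i + 1) - v i = 1 / m := fun i => by simp only [v]; push_cast; ring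
  have hle : ∀ i, v i ≤ v (i + 1) := fun i => by
    rw [← sub_nonneg, hv_succ]; positivity
  have hpiece : ∀ i < m,
      |(τ (v (i + 1)) - τ (v i)) * Φ (v i, v (i + 1)) - ∫ u in v i..v (i + 1), τ' u * Φ (u, u)|
        ≤ K * (δ / (K + 1)) * (1 / m) := fun i hi =>
    (abs_sub_mul_sub_integral_diag_le (a := v i) (b := v (i + 1)) hτ hτ' hΦ hK hΦη
      (natCast_div_mem_Icc hi.le).1 (hle i) (natCast_div_mem_Icc hi).2
      (by rwa [hv_succ])).trans_eq (by rw [hv_succ])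
  have hdiag : ContinuousOn (fun u => τ' u * Φ (u, u)) (Icc 0 1) :=
    hτ'.mul (hΦ.comp (continuous_id.prodMk continuous_id).continuousOn fun u hu => ⟨hu, hu⟩)
  rw [Real.dist_eq, intervalIntegral_eq_sum_uniformPartition hdiag (Nat.cast_pos.mp hm0).ne',
    ← Finset.sum_sub_distrib]
  calc _ ≤ ∑ i ∈ Finset.range m, K * (δ / (K + 1)) * (1 / m) :=
        (Finset.abs_sum_le_sum_abs _ _).trans
          (Finset.sum_le_sum fun i hi => hpiece i (Finset.mem_range.mp hi))
    _ = δ * (K / (K + 1)) := by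
        rw [Finset.sum_const, Finset.card_range, nsmul_eq_mul]
        field_simp
    _ < δ := mul_lt_of_lt_one_right hδ ((div_lt_one (by positivity)).mpr (lt_add_one K))

theorem tendsto_uniformPartition_sum_of_abs_sub_mul_le_sq
    (hτ : ∀ u ∈ Icc (0 : ℝ) 1, HasDerivAt τ (τ' u) u)
    (hτ' : ContinuousOn τ' (Icc 0 1)) {Φ : ℝ × ℝ → ℝ} (hΦ : ContinuousOn Φ (Icc 0 1 ×ˢ Icc 0 1))
    {I : ℝ → ℝ → ℝ} {C : ℝ} (hI : ∀ u ∈ Icc (0 : ℝ) 1, ∀ v ∈ Icc (0 : ℝ) 1, u ≤ v →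
      |I u v - (τ v - τ u) * Φ (u, v)| ≤ C * (τ v - τ u) ^ 2) :
    Tendsto (fun m : ℕ => ∑ i ∈ Finset.range m, I (i / m) ((i + 1 : ℕ) / m))
      atTop (𝓝 (∫ u in (0 : ℝ)..1, τ' u * Φ (u, u))) := by
  obtain ⟨K, hK⟩ := isCompact_Icc.exists_bound_of_continuousOn hτ'
  have hlip : ∀ u ∈ Icc (0 : ℝ) 1, ∀ v ∈ Icc (0 : ℝ) 1, |τ v - τ u| ≤ K * |v - u| :=
    fun u hu v hv => (convex_Icc 0 1).norm_image_sub_le_of_norm_hasDerivWithin_le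
      (fun x hx => (hτ x hx).hasDerivWithinAt) hK hu hv
  have herr : Tendsto (fun m : ℕ => ∑ i ∈ Finset.range m,
      (I (i / m) ((i + 1 : ℕ) / m) -
        (τ ((i + 1 : ℕ) / m) - τ (i / m)) * Φ (i / m, (i + 1 : ℕ) / m)))
      atTop (𝓝 0) := by
    refine squeeze_zero_norm' (a := fun m : ℕ => |C| * K ^ 2 / m)
      ((eventually_ne_atTop 0).mono fun m hm => ?_) (tendsto_const_div_atTop_nhds_zero_nat _)
    have hm0 : (0 : ℝ) < m := by exact_mod_cast Nat.pos_of_ne_zero hm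
    refine (norm_sum_le _ _).trans ?_
    calc _ ≤ ∑ _i ∈ Finset.range m, |C| * (K * (1 / m)) ^ 2 := Finset.sum_le_sum fun i hi => ?_
      _ = |C| * K ^ 2 / m := by
        rw [Finset.sum_const, Finset.card_range, nsmul_eq_mul]
        field_simp
    have hi : i < m := Finset.mem_range.mp hi
    have hu := natCast_div_mem_Icc (m := m) hi.le
    have hv := natCast_div_mem_Icc hi
    rw [Real.norm_eq_abs]
    refine (hI _ hu _ hv (by gcongr; simp)).trans ?_
    calc _ ≤ |C| * |τ ((i + 1 : ℕ) / m) - τ (i / m)| ^ 2 := by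
          rw [sq_abs]; gcongr; exact le_abs_self C
      _ ≤ |C| * (K * (1 / m)) ^ 2 := by
          gcongr
          refine (hlip _ hu _ hv).trans_eq ?_
          rw [show ((i + 1 : ℕ) : ℝ) / m - i / m = 1 / m by push_cast; ring,
            abs_of_pos (by positivity)]
  simpa using (tendsto_uniformPartition_sum_sub_mul hτ hτ' hΦ).add herr

end RiemannSum

section Distillation

variable {d : ℕ}

instance isProbabilityMeasure_stdGaussian : IsProbabilityMeasure (stdGaussian d) :=
  Measure.isProbabilityMeasure_map (MeasurableEquiv.toLp 2 (Fin d → ℝ)).measurable.aemeasurable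

lemma sub_one_mul_l1ConsistencyDistillationLoss_succ (μ : Measure (EuclideanSpace ℝ (Fin d)))
    (lam : ℝ → ℝ) (f s : EuclideanSpace ℝ (Fin d) → ℝ → EuclideanSpace ℝ (Fin d)) (τ : ℝ → ℝ)
    (m : ℕ) :
    (((m + 1 : ℕ) : ℝ) - 1) * l1ConsistencyDistillationLoss d μ lam f s (m + 1)
        (fun n => τ (((n : ℝ) - 1) / (((m + 1 : ℕ) : ℝ) - 1))) =
      ∑ i ∈ Finset.range m, l1DistillationStepLoss (μ.prod (stdGaussian d)) lam f s
        (τ (i / m)) (τ ((i + 1 : ℕ) / m)) := by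
  have hm : ((m + 1 : ℕ) : ℝ) - 1 = m := by push_cast; ring
  rw [l1ConsistencyDistillationLoss, hm, Nat.add_sub_cancel, ← Finset.Ico_add_one_right_eq_Icc,
    Finset.sum_Ico_eq_sum_range, Nat.add_sub_cancel]
  rcases eq_or_ne m 0 with rfl | hm0
  · simp
  rw [← mul_assoc, mul_one_div_cancel (Nat.cast_ne_zero.mpr hm0), one_mul]
  refine Finset.sum_congr rfl fun i _ => ?_
  rw [l1DistillationStepLoss]
  push_cast
  ring_nf

end Distillation

theorem continuous_time_consistency_distillation_l1_general
    (d : ℕ) (ε T : ℝ)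
    (τ τ' : ℝ → ℝ)
    (hτderiv : ∀ u ∈ Set.Icc (0 : ℝ) 1, HasDerivAt τ (τ' u) u)
    (hτ'cont : ContinuousOn τ' (Set.Icc (0 : ℝ) 1))
    (hτmono : StrictMonoOn τ (Set.Icc (0 : ℝ) 1))
    (hτ0 : τ 0 = ε) (hτ1 : τ 1 = T)
    (μ : Measure (EuclideanSpace ℝ (Fin d))) [IsProbabilityMeasure μ]
    -- consistency model: C² with bounded first and second derivatives
    (f : EuclideanSpace ℝ (Fin d) → ℝ → EuclideanSpace ℝ (Fin d))
    (hf : ContDiff ℝ 2 (fun q : EuclideanSpace ℝ (Fin d) × ℝ => f q.1 q.2))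
    (hf_bdd : ∃ M : ℝ, ∀ q : EuclideanSpace ℝ (Fin d) × ℝ,
      ‖iteratedFDeriv ℝ 1 (fun q' : EuclideanSpace ℝ (Fin d) × ℝ => f q'.1 q'.2) q‖ ≤ M ∧
      ‖iteratedFDeriv ℝ 2 (fun q' : EuclideanSpace ℝ (Fin d) × ℝ => f q'.1 q'.2) q‖ ≤ M)
    -- bounded continuous weighting function
    (lam : ℝ → ℝ) (hlam_cont : Continuous lam)
    (hlam_bdd : ∃ M : ℝ, ∀ u ∈ Set.Icc ε T, |lam u| ≤ M)
    -- bounded continuous score model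
    (s : EuclideanSpace ℝ (Fin d) → ℝ → EuclideanSpace ℝ (Fin d))
    (hs_cont : Continuous (fun q : EuclideanSpace ℝ (Fin d) × ℝ => s q.1 q.2))
    (hs_bdd : ∃ M : ℝ, ∀ y : EuclideanSpace ℝ (Fin d), ∀ u ∈ Set.Icc ε T, ‖s y u‖ ≤ M)
    -- all expectations below are finite
    (hIntCD : ∀ t₁ ∈ Set.Icc ε T, ∀ t₂ ∈ Set.Icc ε T,
      Integrable (fun q : EuclideanSpace ℝ (Fin d) × EuclideanSpace ℝ (Fin d) =>
        lam t₁ * l1norm (f (q.1 + t₂ • q.2) t₂ -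
          f (q.1 + t₂ • q.2 + ((t₂ - t₁) * t₂) • s (q.1 + t₂ • q.2) t₂) t₁))
        (μ.prod (stdGaussian d))) :
    Filter.Tendsto (fun N : ℕ => ((N : ℝ) - 1) *
        l1ConsistencyDistillationLoss d μ lam f s N
          (fun n => τ (((n : ℝ) - 1) / ((N : ℝ) - 1))))
      Filter.atTop
      (nhds (∫ u in (0 : ℝ)..1,
        ∫ q : EuclideanSpace ℝ (Fin d) × EuclideanSpace ℝ (Fin d),
          lam (τ u) * τ' u *
            l1norm (τ u • (fderiv ℝ (fun y => f y (τ u)) (q.1 + τ u • q.2))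
                (s (q.1 + τ u • q.2) (τ u)) -
              deriv (fun w => f (q.1 + τ u • q.2) w) (τ u))
          ∂(μ.prod (stdGaussian d)))) := by
  obtain ⟨M, hM⟩ := hf_bdd
  obtain ⟨Λ, hlam⟩ := hlam_bdd
  obtain ⟨S, hs⟩ := hs_bdd
  obtain ⟨C, hC⟩ :=
    exists_abs_l1DistillationStepLoss_sub_le hlam_cont hf hM hs_cont hlam hs hIntCD
  have hτmaps : MapsTo τ (Icc 0 1) (Icc ε T) := hτ0 ▸ hτ1 ▸ hτmono.monotoneOn.mapsTo_Icc
  have hτcont : ContinuousOn τ (Icc 0 1) := fun u hu =>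
    (hτderiv u hu).continuousAt.continuousWithinAt
  have hDF : ∀ q, ‖fderiv ℝ (fun q : EuclideanSpace ℝ (Fin d) × ℝ => f q.1 q.2) q‖ ≤ M :=
    fun q => by rw [← norm_iteratedFDeriv_one]; exact (hM q).1
  have hΦ := (continuousOn_l1ResidualLoss (P := μ.prod (stdGaussian d)) hlam_cont
    (hf.of_le one_le_two) hs_cont hDF hlam hs).comp (hτcont.prodMap hτcont) (hτmaps.prodMap hτmaps)
  rw [← tendsto_add_atTop_iff_nat 1]
  simp only [sub_one_mul_l1ConsistencyDistillationLoss_succ]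
  convert tendsto_uniformPartition_sum_of_abs_sub_mul_le_sq hτderiv hτ'cont hΦ
    (fun u hu v hv huv => hC _ (hτmaps hu) _ (hτmaps hv) (hτmono.monotoneOn hu hv huv))
    using 4 with u
  rw [Function.comp_apply, Prod.map, l1ResidualLoss, ← integral_const_mul]
  congr 1 with q
  rw [transportResidual]
  ring

/-- **Theorem 4 of "Consistency Models"** (continuous-time consistency distillation with
the `ℓ₁` metric): with time points `t_n = τ((n-1)/(N-1))` and the Euler solver, the
rescaled loss `(N-1) · L_CD^N` converges, as `N → ∞`, to the continuous-time `ℓ₁`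
objective in the transport residual `t·(D_y f)·s - ∂ₜ f`. -/
theorem continuous_time_consistency_distillation_l1
    (d : ℕ) (hd : 1 ≤ d) (ε T : ℝ) (hε : 0 < ε) (hεT : ε < T)
    (τ τ' : ℝ → ℝ)
    (hτderiv : ∀ u ∈ Set.Icc (0 : ℝ) 1, HasDerivAt τ (τ' u) u)
    (hτ'cont : ContinuousOn τ' (Set.Icc (0 : ℝ) 1))
    (hτ'pos : ∀ u ∈ Set.Icc (0 : ℝ) 1, 0 < τ' u)
    (hτmono : StrictMonoOn τ (Set.Icc (0 : ℝ) 1))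
    (hτ0 : τ 0 = ε) (hτ1 : τ 1 = T)
    (μ : Measure (EuclideanSpace ℝ (Fin d))) [IsProbabilityMeasure μ]
    (hμ2 : Integrable (fun x => ‖x‖ ^ 2) μ)
    -- consistency model: C² with bounded first and second derivatives
    (f : EuclideanSpace ℝ (Fin d) → ℝ → EuclideanSpace ℝ (Fin d))
    (hf : ContDiff ℝ 2 (fun q : EuclideanSpace ℝ (Fin d) × ℝ => f q.1 q.2))
    (hf_bdd : ∃ M : ℝ, ∀ q : EuclideanSpace ℝ (Fin d) × ℝ,
      ‖iteratedFDeriv ℝ 1 (fun q' : EuclideanSpace ℝ (Fin d) × ℝ => f q'.1 q'.2) q‖ ≤ M ∧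
      ‖iteratedFDeriv ℝ 2 (fun q' : EuclideanSpace ℝ (Fin d) × ℝ => f q'.1 q'.2) q‖ ≤ M)
    -- bounded continuous weighting function
    (lam : ℝ → ℝ) (hlam_cont : Continuous lam)
    (hlam_bdd : ∃ M : ℝ, ∀ u ∈ Set.Icc ε T, |lam u| ≤ M)
    -- bounded continuous score model
    (s : EuclideanSpace ℝ (Fin d) → ℝ → EuclideanSpace ℝ (Fin d))
    (hs_cont : Continuous (fun q : EuclideanSpace ℝ (Fin d) × ℝ => s q.1 q.2))
    (hs_bdd : ∃ M : ℝ, ∀ y : EuclideanSpace ℝ (Fin d), ∀ u ∈ Set.Icc ε T, ‖s y u‖ ≤ M)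
    -- all expectations below are finite
    (hIntCD : ∀ t₁ ∈ Set.Icc ε T, ∀ t₂ ∈ Set.Icc ε T,
      Integrable (fun q : EuclideanSpace ℝ (Fin d) × EuclideanSpace ℝ (Fin d) =>
        lam t₁ * l1norm (f (q.1 + t₂ • q.2) t₂ -
          f (q.1 + t₂ • q.2 + ((t₂ - t₁) * t₂) • s (q.1 + t₂ • q.2) t₂) t₁))
        (μ.prod (stdGaussian d)))
    (hIntRHS : ∀ u ∈ Set.Icc (0 : ℝ) 1,
      Integrable (fun q : EuclideanSpace ℝ (Fin d) × EuclideanSpace ℝ (Fin d) =>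
        lam (τ u) * τ' u *
          l1norm (τ u • (fderiv ℝ (fun y => f y (τ u)) (q.1 + τ u • q.2))
              (s (q.1 + τ u • q.2) (τ u)) -
            deriv (fun w => f (q.1 + τ u • q.2) w) (τ u))) (μ.prod (stdGaussian d)))
    (hIntU : IntervalIntegrable (fun u =>
      ∫ q : EuclideanSpace ℝ (Fin d) × EuclideanSpace ℝ (Fin d),
        lam (τ u) * τ' u *
          l1norm (τ u • (fderiv ℝ (fun y => f y (τ u)) (q.1 + τ u • q.2))
              (s (q.1 + τ u • q.2) (τ u)) -
            deriv (fun w => f (q.1 + τ u • q.2) w) (τ u)) ∂(μ.prod (stdGaussian d)))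
      volume 0 1) :
    Filter.Tendsto (fun N : ℕ => ((N : ℝ) - 1) *
        l1ConsistencyDistillationLoss d μ lam f s N
          (fun n => τ (((n : ℝ) - 1) / ((N : ℝ) - 1))))
      Filter.atTop
      (nhds (∫ u in (0 : ℝ)..1,
        ∫ q : EuclideanSpace ℝ (Fin d) × EuclideanSpace ℝ (Fin d),
          lam (τ u) * τ' u *
            l1norm (τ u • (fderiv ℝ (fun y => f y (τ u)) (q.1 + τ u • q.2))
                (s (q.1 + τ u • q.2) (τ u)) -
              deriv (fun w => f (q.1 + τ u • q.2) w) (τ u))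
          ∂(μ.prod (stdGaussian d)))) :=
  continuous_time_consistency_distillation_l1_general d ε T τ τ' hτderiv hτ'cont hτmono hτ0 hτ1 μ f
    hf hf_bdd lam hlam_cont hlam_bdd s hs_cont hs_bdd hIntCD
end
end

section
/- Let d ≥ 1 and 0 < ε < T. Let s : ℝ^d × [ε,T] → ℝ^d be continuous and let f : ℝ^d × [ε,T] → ℝ^d be continuously differentiable with f(x, ε) = x for every x ∈ ℝ^d (the boundary condition) and ∂_t f(x,t) − t · D_x f(x,t) · s(x,t) = 0 for every (x,t) ∈ ℝ^d × [ε,T]. Then for every PF-ODE solution γ : [ε,T] → ℝ^d and every t ∈ [ε,T], f(γ(t), t) = γ(ε); that is, f is self-consistent: its outputs are constant along every trajectory of the ODE and equal the trajectory's origin. -/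
/-!
Along a PF-ODE trajectory the chain rule gives
`d/du f(γ u, u) = Dₓf · γ'(u) + ∂ₜf = -u · Dₓf · s + ∂ₜf`, which the transport equation makes
vanish. So `u ↦ f(γ u, u)` is constant on `[ε, T]`, and its value at `u = ε` is `γ ε` by the
boundary condition.
-/

noncomputable section

/-- A PF-ODE solution on `[ε, T]` for the score field `s`: a differentiable curve
`γ : [ε,T] → ℝ^d` with `γ'(u) = -u • s (γ u) u` for all `u ∈ [ε,T]`. -/
def IsPFSolution {d : ℕ} (ε T : ℝ)
    (s : EuclideanSpace ℝ (Fin d) → ℝ → EuclideanSpace ℝ (Fin d))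
    (γ : ℝ → EuclideanSpace ℝ (Fin d)) : Prop :=
  ∀ u ∈ Set.Icc ε T, HasDerivWithinAt γ (-(u • s (γ u) u)) (Set.Icc ε T) u

open Set

section

variable {E G : Type*} [NormedAddCommGroup E] [NormedSpace ℝ E]
  [NormedAddCommGroup G] [NormedSpace ℝ G]

theorem HasFDerivAt.apply_eq_fderiv_add_smul_deriv {f : E → ℝ → G} {L : E × ℝ →L[ℝ] G}
    {x : E} {t : ℝ} (hL : HasFDerivAt (fun q : E × ℝ => f q.1 q.2) L (x, t)) (v : E) (τ : ℝ) :
    L (v, τ) = fderiv ℝ (fun y => f y t) x v + τ • deriv (fun u => f x u) t := by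
  have hx : fderiv ℝ (fun y => f y t) x = L.comp (.inl ℝ E ℝ) :=
    (hL.comp (f := fun y : E => (y, t)) x (hasFDerivAt_prodMk_left x t)).fderiv
  have ht : deriv (fun u => f x u) t = L (0, 1) :=
    (hL.comp_hasDerivAt t ((hasDerivAt_const t x).prodMk (hasDerivAt_id t))).deriv
  have hsplit : ((v, τ) : E × ℝ) = (v, 0) + τ • (0, 1) := by simp
  rw [hx, ht, hsplit, map_add, map_smul]
  rfl

theorem HasDerivWithinAt.uncurry_comp_prodMk {f : E → ℝ → G} {γ : ℝ → E} {γ' : E}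
    {S : Set ℝ} {t : ℝ} (hf : DifferentiableAt ℝ (fun q : E × ℝ => f q.1 q.2) (γ t, t))
    (hγ : HasDerivWithinAt γ γ' S t) :
    HasDerivWithinAt (fun u => f (γ u) u)
      (fderiv ℝ (fun y => f y t) (γ t) γ' + deriv (fun u => f (γ t) u) t) S t := by
  have hL := hf.hasFDerivAt
  have hchain :=
    hL.comp_hasDerivWithinAt (f := fun u => (γ u, u)) t (hγ.prodMk (hasDerivWithinAt_id t S))
  rwa [hL.apply_eq_fderiv_add_smul_deriv, one_smul] at hchain

theorem eq_left_of_hasDerivWithinAt_zero_Icc {g : ℝ → G} {a b : ℝ}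
    (hg : ∀ u ∈ Icc a b, HasDerivWithinAt g 0 (Icc a b) u) : ∀ u ∈ Icc a b, g u = g a :=
  constant_of_has_deriv_right_zero (fun u hu => (hg u hu).continuousWithinAt) fun u hu =>
    (hg u (mem_Icc_of_Ico hu)).mono_of_mem_nhdsWithin (Icc_mem_nhdsGE_of_mem hu)

end

theorem transport_equation_implies_self_consistency_general
    (d : ℕ) (ε T : ℝ)
    (s : EuclideanSpace ℝ (Fin d) → ℝ → EuclideanSpace ℝ (Fin d))
    (f : EuclideanSpace ℝ (Fin d) → ℝ → EuclideanSpace ℝ (Fin d))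
    (hf : ContDiff ℝ 1 (fun q : EuclideanSpace ℝ (Fin d) × ℝ => f q.1 q.2))
    (hboundary : ∀ x : EuclideanSpace ℝ (Fin d), f x ε = x)
    (htransport : ∀ (x : EuclideanSpace ℝ (Fin d)), ∀ t ∈ Set.Icc ε T,
      deriv (fun u => f x u) t = t • (fderiv ℝ (fun y => f y t) x) (s x t)) :
    ∀ γ : ℝ → EuclideanSpace ℝ (Fin d), IsPFSolution ε T s γ →
      ∀ t ∈ Set.Icc ε T, f (γ t) t = γ ε := by
  intro γ hγ t ht
  have hderiv_zero : ∀ u ∈ Icc ε T, HasDerivWithinAt (fun u => f (γ u) u) 0 (Icc ε T) u := by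
    intro u hu
    have hchain := (hγ u hu).uncurry_comp_prodMk (hf.differentiable one_ne_zero _)
    rwa [htransport (γ u) u hu, map_neg, map_smul, neg_add_cancel] at hchain
  simpa only [hboundary] using eq_left_of_hasDerivWithinAt_zero_Icc hderiv_zero t ht

/-- **Converse of the remark after Theorem 3, Consistency Models**: a continuously
differentiable `f` satisfying the boundary condition `f(·, ε) = id` and the transport
equation `∂ₜ f(x,t) = t • (Dₓ f(x,t)) (s x t)` is self-consistent: along any PF-ODE
trajectory `γ` one has `f (γ t) t = γ ε`. -/
theorem transport_equation_implies_self_consistency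
    (d : ℕ) (hd : 1 ≤ d) (ε T : ℝ) (hε : 0 < ε) (hεT : ε < T)
    (s : EuclideanSpace ℝ (Fin d) → ℝ → EuclideanSpace ℝ (Fin d))
    (hs : ContinuousOn (fun q : EuclideanSpace ℝ (Fin d) × ℝ => s q.1 q.2)
      (Set.univ ×ˢ Set.Icc ε T))
    (f : EuclideanSpace ℝ (Fin d) → ℝ → EuclideanSpace ℝ (Fin d))
    (hf : ContDiff ℝ 1 (fun q : EuclideanSpace ℝ (Fin d) × ℝ => f q.1 q.2))
    (hboundary : ∀ x : EuclideanSpace ℝ (Fin d), f x ε = x)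
    (htransport : ∀ (x : EuclideanSpace ℝ (Fin d)), ∀ t ∈ Set.Icc ε T,
      deriv (fun u => f x u) t = t • (fderiv ℝ (fun y => f y t) x) (s x t)) :
    ∀ γ : ℝ → EuclideanSpace ℝ (Fin d), IsPFSolution ε T s γ →
      ∀ t ∈ Set.Icc ε T, f (γ t) t = γ ε :=
  transport_equation_implies_self_consistency_general d ε T s f hf hboundary htransport
end
end
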